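/- Let A be a finite set, let Y ⊆ ℝ^A be a convex set containing the probability simplex Δ(A), and let h : Y → ℝ be strictly convex and differentiable on the relevant points, with Bregman divergence D_h. Let η > 0 and f ∈ ℝ^A, let q ∈ Y be a point at which h is differentiable satisfying ∇h(q) = η·f, and let π̃ ∈ Δ(A) be a minimizer over Δ(A) of the map p ↦ D_h(p, q). Then for every π̄ in the relative interior of Δ(A) at which h is differentiable, one has ⟨η·f − ∇h(π̄), π̃ − π̄⟩ ≥ D_h(π̃, π̄) + D_h(π̄, π̃) ≥ 0. -/

import Mathlib

/-- The probability simplex over a finite set `A`, as a subset of `EuclideanSpace ℝ A`. -/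
def probSimplex (A : Type*) [Fintype A] : Set (EuclideanSpace ℝ A) :=
  {p | (∀ a, 0 ≤ p a) ∧ ∑ a, p a = 1}

/-- The Bregman divergence generated by `h`, where `gh` is the gradient of `h`:
`D_h(x, y) = h x - h y - ⟨gh y, x - y⟩`. -/
noncomputable def bregman {E : Type*} [NormedAddCommGroup E] [InnerProductSpace ℝ E]
    (h : E → ℝ) (gh : E → E) (x y : E) : ℝ :=
  h x - h y - (inner ℝ (gh y) (x - y) : ℝ)

/-!
The minimality of `πt` for `D_h(·, q)` over the convex simplex gives, by Fermat's rule along the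
segment towards `πb`, the variational inequality `⟪∇h(πt) - ∇h(q), πb - πt⟫ ≥ 0`. The symmetrized
divergence `D_h(πt, πb) + D_h(πb, πt)` equals `⟪∇h(πt) - ∇h(πb), πt - πb⟫`, and the variational
inequality says that replacing `∇h(πt)` by `∇h(q) = η f` can only increase it. Both divergences are
nonnegative by the first-order characterization of convexity.
-/

open Set InnerProductSpace

section Convexity

variable {E : Type*} [NormedAddCommGroup E] [InnerProductSpace ℝ E] [CompleteSpace E]
  {φ : E → ℝ} {S : Set E} {g x y : E}

theorem ConvexOn.inner_sub_le_of_hasGradientWithinAt (hφ : ConvexOn ℝ S φ) (hx : x ∈ S)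
    (hy : y ∈ S) (hg : HasGradientWithinAt φ g S y) : ⟪g, x - y⟫_ℝ ≤ φ x - φ y := by
  set L : ℝ →ᵃ[ℝ] E := AffineMap.lineMap y x
  have hline : HasDerivWithinAt (φ ∘ L) ⟪g, x - y⟫_ℝ (L ⁻¹' S) 0 :=
    hg.hasFDerivWithinAt.comp_hasDerivWithinAt_of_eq (0 : ℝ) AffineMap.hasDerivWithinAt_lineMap
      (mapsTo_preimage _ _) (by simp [L])
  simpa [slope_def_field, L] using (hφ.comp_affineMap L).le_slope_of_hasDerivWithinAt
    (by simpa [L] using hy) (by simpa [L] using hx) zero_lt_one hline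

theorem IsMinOn.inner_sub_nonneg_of_hasGradientWithinAt (hmin : IsMinOn φ S x)
    (hS : Convex ℝ S) (hx : x ∈ S) (hy : y ∈ S) (hg : HasGradientWithinAt φ g S x) :
    0 ≤ ⟪g, y - x⟫_ℝ :=
  hmin.localize.hasFDerivWithinAt_nonneg hg.hasFDerivWithinAt
    (sub_mem_posTangentConeAt_of_segment_subset (hS.segment_subset hx hy))

end Convexity

theorem convex_probSimplex (A : Type*) [Fintype A] : Convex ℝ (probSimplex A) :=
  (convex_stdSimplex ℝ A).linear_preimage (WithLp.linearEquiv 2 ℝ (A → ℝ)).toLinearMap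

section Bregman

variable {E : Type*} [NormedAddCommGroup E] [InnerProductSpace ℝ E]

theorem bregman_add_bregman (h : E → ℝ) (gh : E → E) (x y : E) :
    bregman h gh x y + bregman h gh y x = ⟪gh x - gh y, x - y⟫_ℝ := by
  simp only [bregman, inner_sub_left, inner_sub_right, real_inner_comm]
  ring

variable [CompleteSpace E] {h : E → ℝ} {gh : E → E} {S : Set E} {x y q : E}

theorem bregman_nonneg (hh : ConvexOn ℝ S h) (hx : x ∈ S) (hy : y ∈ S)
    (hgy : HasGradientWithinAt h (gh y) S y) : 0 ≤ bregman h gh x y :=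
  sub_nonneg.2 (hh.inner_sub_le_of_hasGradientWithinAt hx hy hgy)

theorem HasGradientWithinAt.bregman_left (hgx : HasGradientWithinAt h (gh x) S x) (q : E) :
    HasGradientWithinAt (bregman h gh · q) (gh x - gh q) S x := by
  have hlin : HasFDerivWithinAt (fun p ↦ ⟪gh q, p - q⟫_ℝ) (toDual ℝ E (gh q)) S x := by
    simpa [inner_sub_right] using
      ((toDual ℝ E (gh q)).hasFDerivWithinAt (s := S) (x := x)).sub_const ⟪gh q, q⟫_ℝ
  rw [hasGradientWithinAt_iff_hasFDerivWithinAt, map_sub]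
  exact (hgx.hasFDerivWithinAt.sub_const (h q)).sub hlin

theorem inner_sub_nonneg_of_isMinOn_bregman (hS : Convex ℝ S) (hx : x ∈ S) (hy : y ∈ S)
    (hmin : ∀ p ∈ S, bregman h gh x q ≤ bregman h gh p q)
    (hgx : HasGradientWithinAt h (gh x) S x) : 0 ≤ ⟪gh x - gh q, y - x⟫_ℝ :=
  (isMinOn_iff.2 hmin).inner_sub_nonneg_of_hasGradientWithinAt hS hx hy (hgx.bregman_left q)

end Bregman

theorem ampo_improvement_inequality_general {A : Type*} [Fintype A]
    (Y : Set (EuclideanSpace ℝ A)) (hYsub : probSimplex A ⊆ Y)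
    (h : EuclideanSpace ℝ A → ℝ) (gh : EuclideanSpace ℝ A → EuclideanSpace ℝ A)
    (hconv : StrictConvexOn ℝ Y h)
    (η : ℝ) (f : EuclideanSpace ℝ A)
    (q : EuclideanSpace ℝ A)
    (hq_dual : gh q = η • f)
    (πt : EuclideanSpace ℝ A) (hπt : πt ∈ probSimplex A)
    (hπt_grad : HasGradientWithinAt h (gh πt) Y πt)
    (hπt_min : ∀ p ∈ probSimplex A, bregman h gh πt q ≤ bregman h gh p q)
    (πb : EuclideanSpace ℝ A) (hπb : πb ∈ intrinsicInterior ℝ (probSimplex A))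
    (hπb_grad : HasGradientWithinAt h (gh πb) Y πb) :
    bregman h gh πt πb + bregman h gh πb πt ≤ (inner ℝ (η • f - gh πb) (πt - πb) : ℝ) ∧
      0 ≤ bregman h gh πt πb + bregman h gh πb πt := by
  have hπb_mem : πb ∈ probSimplex A := intrinsicInterior_subset hπb
  have hopt : 0 ≤ ⟪gh πt - gh q, πb - πt⟫_ℝ :=
    inner_sub_nonneg_of_isMinOn_bregman (convex_probSimplex A) hπt hπb_mem hπt_min
      (hπt_grad.hasFDerivWithinAt.mono hYsub)
  refine ⟨?_, add_nonneg ?_ ?_⟩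
  · rw [bregman_add_bregman, ← hq_dual]
    simp only [inner_sub_left, inner_sub_right] at hopt ⊢
    linarith
  · exact bregman_nonneg hconv.convexOn (hYsub hπt) (hYsub hπb_mem) hπb_grad
  · exact bregman_nonneg hconv.convexOn (hYsub hπb_mem) (hYsub hπt) hπt_grad

/-- the improvement inequality for the Bregman projection onto the simplex. -/
theorem ampo_improvement_inequality {A : Type*} [Fintype A] [Nonempty A]
    (Y : Set (EuclideanSpace ℝ A)) (hYconv : Convex ℝ Y) (hYsub : probSimplex A ⊆ Y)
    (h : EuclideanSpace ℝ A → ℝ) (gh : EuclideanSpace ℝ A → EuclideanSpace ℝ A)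
    (hconv : StrictConvexOn ℝ Y h)
    (η : ℝ) (hη : 0 < η) (f : EuclideanSpace ℝ A)
    (q : EuclideanSpace ℝ A) (hqY : q ∈ Y)
    (hq_grad : HasGradientWithinAt h (gh q) Y q)
    (hq_dual : gh q = η • f)
    (πt : EuclideanSpace ℝ A) (hπt : πt ∈ probSimplex A)
    (hπt_grad : HasGradientWithinAt h (gh πt) Y πt)
    (hπt_min : ∀ p ∈ probSimplex A, bregman h gh πt q ≤ bregman h gh p q)
    (πb : EuclideanSpace ℝ A) (hπb : πb ∈ intrinsicInterior ℝ (probSimplex A))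
    (hπb_grad : HasGradientWithinAt h (gh πb) Y πb) :
    bregman h gh πt πb + bregman h gh πb πt ≤ (inner ℝ (η • f - gh πb) (πt - πb) : ℝ) ∧
      0 ≤ bregman h gh πt πb + bregman h gh πb πt :=
  ampo_improvement_inequality_general Y hYsub h gh hconv η f q hq_dual πt hπt hπt_grad hπt_min πb
    hπb hπb_grad
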